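/- For the functional F(h,g) = G₁(g)·G₂(h·A(g)) where A(g)(x) = q + ∫ g(z) ℓ(z|x) ν(dz) and G₂ is defined by a Janossy expansion G₂(u) = Σ_n (1/n!) ∫ j^(n)(x_{1:n}) ∏ u(x_i) ν(dx_{1:n}), the m-fold directional derivative of F(1,·) in directions δ_{z_1},…,δ_{z_m} evaluated at g = 0 equals Σ_{n≥0} Σ_{S⊂{1,…,m},|S|≤n} ∏_{j∉S} c(z_j) · (q^{n−|S|}/(n−|S|)!) ∫ j^(n)(x_{1:n}) ∏_{i∈S} ℓ(z_i|x_i) ν(dx_{1:n}), where c is the derivative density of the Poisson functional G₁ at 0. -/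

import Mathlib

open MeasureTheory Finset

/-- Mixed partial derivative of `F : (Fin m → ℝ) → ℝ` at `0` with respect to the
coordinates in `T`: this encodes the iterated directional derivative of a
functional in the Dirac directions `δ_{z_i}`, `i ∈ T`, after parametrizing
`g = Σ_i ε_i δ_{z_i}`. -/
noncomputable def mixedPartial {m : ℕ} (F : (Fin m → ℝ) → ℝ) (T : Finset (Fin m)) : ℝ :=
  iteratedFDeriv ℝ T.card F 0 (fun k => Pi.single ((T.orderEmbOfFin rfl) k) (1 : ℝ))

namespace JanossyAux

variable {m : ℕ}

/-- directional partial derivative in coordinate `i`. -/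
noncomputable def Dp (i : Fin m) (f : (Fin m → ℝ) → ℝ) : (Fin m → ℝ) → ℝ :=
  fun x => fderiv ℝ f x (Pi.single i 1)

/-- iterated partial derivatives along a list (head outermost). -/
noncomputable def DIter : List (Fin m) → ((Fin m → ℝ) → ℝ) → ((Fin m → ℝ) → ℝ)
  | [], f => f
  | i :: L, f => Dp i (DIter L f)

lemma Dp_contDiff {f : (Fin m → ℝ) → ℝ} (hf : ContDiff ℝ (⊤ : ℕ∞) f) (i : Fin m) :
    ContDiff ℝ (⊤ : ℕ∞) (Dp i f) := by
  have h1 : ContDiff ℝ (⊤ : ℕ∞) (fderiv ℝ f) := hf.fderiv_right (by simp)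
  exact (ContinuousLinearMap.apply ℝ ℝ (Pi.single i 1 : Fin m → ℝ)).contDiff.comp h1

lemma DIter_contDiff (L : List (Fin m)) {f : (Fin m → ℝ) → ℝ} (hf : ContDiff ℝ (⊤ : ℕ∞) f) :
    ContDiff ℝ (⊤ : ℕ∞) (DIter L f) := by
  induction L with
  | nil => exact hf
  | cons i L ih => exact Dp_contDiff ih i

lemma iteratedFDeriv_dirs {f : (Fin m → ℝ) → ℝ} (hf : ContDiff ℝ (⊤ : ℕ∞) f) :
    ∀ (n : ℕ) (v : Fin n → Fin m) (x : Fin m → ℝ),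
      iteratedFDeriv ℝ n f x (fun k => Pi.single (v k) 1) = DIter (List.ofFn v) f x := by
  intro n
  induction n with
  | zero => intro v x; simp [DIter, iteratedFDeriv_zero_apply]
  | succ n ih =>
    intro v x
    rw [List.ofFn_succ]
    have hdiff : Differentiable ℝ (iteratedFDeriv ℝ n f) :=
      hf.differentiable_iteratedFDeriv (by exact_mod_cast lt_top_iff_ne_top.2 (by simp))
    have hIH : DIter (List.ofFn fun k : Fin n => v k.succ) f
        = fun y => iteratedFDeriv ℝ n f y (fun k => Pi.single (v k.succ) 1) := by
      funext y; rw [ih (fun k => v k.succ) y]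
    have h1 : iteratedFDeriv ℝ (n + 1) f x (fun k => Pi.single (v k) 1)
        = (fderiv ℝ (iteratedFDeriv ℝ n f) x (Pi.single (v 0) 1))
            (fun k : Fin n => Pi.single (v k.succ) 1) := by
      rw [iteratedFDeriv_succ_apply_left]
      rfl
    set A := ContinuousMultilinearMap.apply ℝ (fun _ : Fin n => (Fin m → ℝ)) ℝ
      (fun k : Fin n => Pi.single (v k.succ) 1) with hA
    have h2 : (fun y => iteratedFDeriv ℝ n f y (fun k => Pi.single (v k.succ) 1))
        = fun y => A (iteratedFDeriv ℝ n f y) := rfl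
    have h3 : fderiv ℝ (fun y => A (iteratedFDeriv ℝ n f y)) x
        = A.comp (fderiv ℝ (iteratedFDeriv ℝ n f) x) := by
      rw [show (fun y => A (iteratedFDeriv ℝ n f y)) = A ∘ iteratedFDeriv ℝ n f from rfl]
      rw [fderiv_comp x A.differentiableAt (hdiff x), A.fderiv]
    show _ = Dp (v 0) (DIter (List.ofFn fun k : Fin n => v k.succ) f) x
    rw [h1, hIH, Dp, h2, h3]
    rfl

lemma mixedPartial_eq_DIter {f : (Fin m → ℝ) → ℝ} (hf : ContDiff ℝ (⊤ : ℕ∞) f) (T : Finset (Fin m)) :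
    mixedPartial f T = DIter (List.ofFn fun k => T.orderEmbOfFin rfl k) f 0 := by
  rw [mixedPartial, iteratedFDeriv_dirs hf T.card (fun k => T.orderEmbOfFin rfl k) 0]


variable {m : ℕ}

lemma Dp_mul {f g : (Fin m → ℝ) → ℝ} (hf : ContDiff ℝ (⊤ : ℕ∞) f) (hg : ContDiff ℝ (⊤ : ℕ∞) g) (i : Fin m) :
    Dp i (fun x => f x * g x) = fun x => Dp i f x * g x + f x * Dp i g x := by
  funext x
  have := fderiv_fun_mul (𝕜 := ℝ) (hf.differentiable (by simp) x) (hg.differentiable (by simp) x)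
  simp only [Dp, this]
  simp only [ContinuousLinearMap.add_apply, ContinuousLinearMap.coe_smul', Pi.smul_apply,
    smul_eq_mul]
  ring

lemma Dp_sum {ι : Type*} (s : Finset ι) (A : ι → (Fin m → ℝ) → ℝ)
    (hA : ∀ a ∈ s, ContDiff ℝ (⊤ : ℕ∞) (A a)) (i : Fin m) :
    Dp i (fun x => ∑ a ∈ s, A a x) = fun x => ∑ a ∈ s, Dp i (A a) x := by
  funext x
  simp only [Dp]
  rw [fderiv_fun_sum (fun a ha => ((hA a ha).differentiable (by simp) x))]
  simp

lemma DIter_mul (L : List (Fin m)) (hL : L.Nodup) {f g : (Fin m → ℝ) → ℝ}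
    (hf : ContDiff ℝ (⊤ : ℕ∞) f) (hg : ContDiff ℝ (⊤ : ℕ∞) g) :
    DIter L (fun x => f x * g x) = fun x =>
      ∑ T ∈ L.toFinset.powerset,
        DIter (L.filter (· ∈ T)) f x * DIter (L.filter (· ∉ T)) g x := by
  induction L with
  | nil => simp [DIter]
  | cons i L ih =>
    have hiL : i ∉ L := (List.nodup_cons.1 hL).1
    have hL' : L.Nodup := (List.nodup_cons.1 hL).2
    have hform : ∀ T : Finset (Fin m), T ∈ L.toFinset.powerset →
        ContDiff ℝ (⊤ : ℕ∞) (fun x => DIter (L.filter (· ∈ T)) f x * DIter (L.filter (· ∉ T)) g x) :=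
      fun T _ => (DIter_contDiff _ hf).mul (DIter_contDiff _ hg)
    show Dp i (DIter L fun x => f x * g x) = _
    rw [ih hL']
    rw [Dp_sum _ _ hform]
    have hstep : ∀ T ∈ L.toFinset.powerset,
        Dp i (fun x => DIter (L.filter (· ∈ T)) f x * DIter (L.filter (· ∉ T)) g x)
          = fun x => DIter (i :: L.filter (· ∈ T)) f x * DIter (L.filter (· ∉ T)) g x
              + DIter (L.filter (· ∈ T)) f x * DIter (i :: L.filter (· ∉ T)) g x := by
      intro T _
      rw [Dp_mul (DIter_contDiff _ hf) (DIter_contDiff _ hg)]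
      rfl
    have hiLt : i ∉ L.toFinset := by simpa using hiL
    funext x
    rw [Finset.sum_congr rfl (fun T hT => congrFun (hstep T hT) x)]
    rw [List.toFinset_cons, Finset.sum_powerset_insert hiLt]
    rw [Finset.sum_add_distrib, add_comm]
    congr 1
    · -- terms where i is NOT in T : i goes to the g side
      refine Finset.sum_congr rfl fun T hT => ?_
      rw [Finset.mem_powerset] at hT
      have hiT : i ∉ T := fun h => hiLt (hT h)
      have e1 : (i :: L).filter (· ∈ T) = L.filter (· ∈ T) := by
        simp [List.filter_cons, hiT]
      have e2 : (i :: L).filter (· ∉ T) = i :: L.filter (· ∉ T) := by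
        simp [List.filter_cons, hiT]
      rw [e1, e2]
    · -- terms where i IS in T (i.e. T' = insert i T) : i goes to the f side
      refine Finset.sum_congr rfl fun T hT => ?_
      rw [Finset.mem_powerset] at hT
      have e1 : (i :: L).filter (· ∈ insert i T) = i :: L.filter (· ∈ T) := by
        simp only [List.filter_cons]
        rw [if_pos (by simp)]
        congr 1
        refine List.filter_congr fun j hj => ?_
        have : j ≠ i := fun h => hiL (h ▸ hj)
        simp [Finset.mem_insert, this]
      have e2 : (i :: L).filter (· ∉ insert i T) = L.filter (· ∉ T) := by
        simp only [List.filter_cons]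
        rw [if_neg (by simp)]
        refine List.filter_congr fun j hj => ?_
        have : j ≠ i := fun h => hiL (h ▸ hj)
        simp [Finset.mem_insert, this]
      rw [e1, e2]


variable {m : ℕ}

/-- the monomial `∏_{k : φ k = some i} x i`. -/
noncomputable def Mono {n : ℕ} (φ : Fin n → Option (Fin m)) : (Fin m → ℝ) → ℝ :=
  fun x => ∏ k, (φ k).elim 1 x

lemma mono_factor_contDiff (o : Option (Fin m)) :
    ContDiff ℝ (⊤ : ℕ∞) (fun x : Fin m → ℝ => (o.elim 1 x : ℝ)) := by
  cases o with
  | none => exact contDiff_const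
  | some i =>
    simpa using contDiff_apply ℝ ℝ (n := (⊤ : ℕ∞)) i

lemma Mono_contDiff {n : ℕ} (φ : Fin n → Option (Fin m)) : ContDiff ℝ (⊤ : ℕ∞) (Mono φ) := by
  classical
  unfold Mono
  induction (Finset.univ : Finset (Fin n)) using Finset.cons_induction with
  | empty => simpa using contDiff_const
  | cons k s hk ih =>
    simp only [Finset.prod_cons]
    exact (mono_factor_contDiff (φ k)).mul ih

lemma hasFDerivAt_mono_factor {n : ℕ} (φ : Fin n → Option (Fin m)) (k : Fin n) (x : Fin m → ℝ) :
    HasFDerivAt (fun x : Fin m → ℝ => ((φ k).elim 1 x : ℝ))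
      (Option.elim (φ k) (0 : (Fin m → ℝ) →L[ℝ] ℝ)
        (fun i => ContinuousLinearMap.proj (R := ℝ) (φ := fun _ : Fin m => ℝ) i)) x := by
  cases hφ : φ k with
  | none => simpa [hφ] using hasFDerivAt_const (1 : ℝ) x
  | some i =>
    simpa [hφ] using
      (hasFDerivAt_apply (F' := fun _ : Fin m => ℝ) i x)

lemma Dp_mono {n : ℕ} (φ : Fin n → Option (Fin m)) (i : Fin m) :
    Dp i (Mono φ) = fun x =>
      ∑ k ∈ univ.filter (fun k => φ k = some i), Mono (Function.update φ k none) x := by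
  classical
  funext x
  have hprod := HasFDerivAt.finset_prod (u := (univ : Finset (Fin n)))
    (fun k _ => hasFDerivAt_mono_factor φ k x)
  rw [Dp]
  show (fderiv ℝ (fun x => ∏ k : Fin n, ((φ k).elim 1 x : ℝ)) x) (Pi.single i 1) = _
  rw [hprod.fderiv]
  simp only [ContinuousLinearMap.coe_sum', Finset.sum_apply, ContinuousLinearMap.coe_smul',
    Pi.smul_apply, smul_eq_mul]
  rw [Finset.sum_filter]
  refine Finset.sum_congr rfl fun k _ => ?_
  cases hφ : φ k with
  | none => simp [hφ]
  | some j =>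
    simp only [hφ, Option.elim_some, ContinuousLinearMap.proj_apply]
    have hM : Mono (Function.update φ k none) x = ∏ j ∈ univ.erase k, (φ j).elim 1 x := by
      unfold Mono
      have : (fun j => ((Function.update φ k none j).elim 1 x : ℝ))
          = Function.update (fun j => ((φ j).elim 1 x : ℝ)) k 1 := by
        funext j
        by_cases hj : j = k
        · subst hj; simp
        · simp [Function.update_of_ne hj]
      rw [this, Finset.prod_update_of_mem (Finset.mem_univ k)]
      rw [one_mul, Finset.erase_eq]
    by_cases hji : j = i
    · subst hji
      simp [hM, Pi.single_apply]
    · have : (some j = some i) = False := by simp [hji]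
      simp [Pi.single_apply, hji, Ne.symm hji, this]

noncomputable def DM {n : ℕ} : List (Fin m) → (Fin n → Option (Fin m)) → ((Fin m → ℝ) → ℝ)
  | [], φ => Mono φ
  | i :: L, φ => fun x =>
      ∑ k ∈ univ.filter (fun k => φ k = some i), DM L (Function.update φ k none) x

lemma DM_contDiff {n : ℕ} (L : List (Fin m)) (φ : Fin n → Option (Fin m)) :
    ContDiff ℝ (⊤ : ℕ∞) (DM L φ) := by
  induction L generalizing φ with
  | nil => exact Mono_contDiff φ
  | cons i L ih => exact ContDiff.sum fun k _ => ih _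

lemma filter_update_eq {n : ℕ} (φ : Fin n → Option (Fin m)) {i j : Fin m} (hij : i ≠ j)
    {k' : Fin n} (hk' : φ k' = some j) :
    univ.filter (fun k => Function.update φ k' none k = some i)
      = univ.filter (fun k => φ k = some i) := by
  classical
  ext k
  simp only [Finset.mem_filter, Finset.mem_univ, true_and]
  by_cases hk : k = k'
  · subst hk
    simp [hk', Ne.symm hij]
  · simp [Function.update_of_ne hk]

lemma Dp_DM {n : ℕ} (L : List (Fin m)) (i : Fin m) (hi : i ∉ L)
    (φ : Fin n → Option (Fin m)) :
    Dp i (DM L φ) = fun x =>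
      ∑ k ∈ univ.filter (fun k => φ k = some i), DM L (Function.update φ k none) x := by
  classical
  induction L generalizing φ with
  | nil => exact Dp_mono φ i
  | cons j L ih =>
    have hij : i ≠ j := by rintro rfl; exact hi List.mem_cons_self
    have hiL : i ∉ L := fun h => hi (List.mem_cons_of_mem j h)
    show Dp i (fun x => ∑ k' ∈ univ.filter (fun k' => φ k' = some j),
        DM L (Function.update φ k' none) x) = _
    rw [Dp_sum _ _ (fun k' _ => DM_contDiff L _)]
    funext x
    have h1 : ∀ k' ∈ univ.filter (fun k' => φ k' = some j),
        Dp i (DM L (Function.update φ k' none)) x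
          = ∑ k ∈ univ.filter (fun k => φ k = some i),
              DM L (Function.update (Function.update φ k' none) k none) x := by
      intro k' hk'
      rw [Finset.mem_filter] at hk'
      rw [ih hiL]
      rw [filter_update_eq φ hij hk'.2]
    rw [Finset.sum_congr rfl h1]
    rw [Finset.sum_comm]
    show _ = ∑ k ∈ univ.filter (fun k => φ k = some i),
        ∑ k' ∈ univ.filter (fun k' => Function.update φ k none k' = some j),
          DM L (Function.update (Function.update φ k none) k' none) x
    refine Finset.sum_congr rfl fun k hk => ?_
    rw [Finset.mem_filter] at hk
    rw [filter_update_eq φ (Ne.symm hij) hk.2]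
    refine Finset.sum_congr rfl fun k' hk' => ?_
    rw [Finset.mem_filter] at hk'
    have hkk' : k' ≠ k := by
      intro h
      rw [h, hk.2] at hk'
      exact hij (Option.some_inj.1 hk'.2)
    rw [Function.update_comm hkk']

lemma DIter_mono {n : ℕ} (L : List (Fin m)) (hL : L.Nodup) (φ : Fin n → Option (Fin m)) :
    DIter L (Mono φ) = DM L φ := by
  induction L with
  | nil => rfl
  | cons i L ih =>
    have hiL : i ∉ L := (List.nodup_cons.1 hL).1
    have hL' : L.Nodup := (List.nodup_cons.1 hL).2
    show Dp i (DIter L (Mono φ)) = _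
    rw [ih hL', Dp_DM L i hiL φ]
    rfl


variable {m : ℕ}

/-- `φ` encodes a partial bijection onto `U`. -/
def Good {n : ℕ} (φ : Fin n → Option (Fin m)) (U : Finset (Fin m)) : Prop :=
  (∀ k₁ k₂ j, φ k₁ = some j → φ k₂ = some j → k₁ = k₂) ∧ ∀ j, (∃ k, φ k = some j) ↔ j ∈ U

lemma DM_zero_of_good {n : ℕ} (L : List (Fin m)) (hL : L.Nodup) (φ : Fin n → Option (Fin m))
    (h : Good φ L.toFinset) : DM L φ 0 = 1 := by
  classical
  induction L generalizing φ with
  | nil =>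
    have hnone : ∀ k, φ k = none := by
      intro k
      cases hφ : φ k with
      | none => rfl
      | some j =>
        exact absurd ((h.2 j).1 ⟨k, hφ⟩) (by simp)
    show Mono φ 0 = 1
    unfold Mono
    refine Finset.prod_eq_one fun k _ => by rw [hnone k]; rfl
  | cons i L ih =>
    have hiL : i ∉ L := (List.nodup_cons.1 hL).1
    have hL' : L.Nodup := (List.nodup_cons.1 hL).2
    obtain ⟨k₀, hk₀⟩ : ∃ k₀, φ k₀ = some i := (h.2 i).2 (by simp)
    have hfilter : univ.filter (fun k => φ k = some i) = {k₀} := by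
      ext k
      simp only [Finset.mem_filter, Finset.mem_univ, true_and, Finset.mem_singleton]
      exact ⟨fun hk => h.1 k k₀ i hk hk₀, fun hk => hk ▸ hk₀⟩
    show (∑ k ∈ univ.filter (fun k => φ k = some i), DM L (Function.update φ k none) 0) = 1
    rw [hfilter, Finset.sum_singleton]
    refine ih hL' _ ⟨?_, ?_⟩
    · intro k₁ k₂ j h₁ h₂
      have hk₁ : k₁ ≠ k₀ := fun hh => by rw [hh, Function.update_self] at h₁; exact absurd h₁ (by simp)
      have hk₂ : k₂ ≠ k₀ := fun hh => by rw [hh, Function.update_self] at h₂; exact absurd h₂ (by simp)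
      rw [Function.update_of_ne hk₁] at h₁
      rw [Function.update_of_ne hk₂] at h₂
      exact h.1 k₁ k₂ j h₁ h₂
    · intro j
      constructor
      · rintro ⟨k, hk⟩
        have hkk₀ : k ≠ k₀ := fun hh => by rw [hh, Function.update_self] at hk; exact absurd hk (by simp)
        rw [Function.update_of_ne hkk₀] at hk
        have hj : j ∈ (i :: L).toFinset := (h.2 j).1 ⟨k, hk⟩
        rw [List.toFinset_cons, Finset.mem_insert] at hj
        rcases hj with hj | hj
        · exact absurd (h.1 k k₀ j hk (hj ▸ hk₀)) hkk₀
        · exact hj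
      · intro hj
        have hji : j ≠ i := fun hh => hiL (hh ▸ List.mem_toFinset.1 hj)
        obtain ⟨k, hk⟩ := (h.2 j).2 (by rw [List.toFinset_cons, Finset.mem_insert]; exact Or.inr hj)
        have hkk₀ : k ≠ k₀ := fun hh => hji (Option.some_inj.1 (by rw [← hk, hh, hk₀]))
        exact ⟨k, by rw [Function.update_of_ne hkk₀]; exact hk⟩

lemma DM_zero_of_bad {n : ℕ} (L : List (Fin m)) (hL : L.Nodup) (φ : Fin n → Option (Fin m))
    (h : ¬ Good φ L.toFinset) : DM L φ 0 = 0 := by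
  classical
  induction L generalizing φ with
  | nil =>
    by_cases hall : ∀ k, φ k = none
    · exfalso
      refine h ⟨fun k₁ k₂ j h₁ _ => absurd h₁ (by rw [hall k₁]; simp), fun j => ?_⟩
      simp only [List.toFinset_nil, Finset.notMem_empty, iff_false]
      rintro ⟨k, hk⟩
      rw [hall k] at hk
      exact absurd hk (by simp)
    · push_neg at hall
      obtain ⟨k₀, hk₀⟩ := hall
      obtain ⟨j, hj⟩ := Option.ne_none_iff_exists'.1 hk₀
      show Mono φ 0 = 0
      unfold Mono
      refine Finset.prod_eq_zero (Finset.mem_univ k₀) ?_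
      rw [hj]
      rfl
  | cons i L ih =>
    have hiL : i ∉ L := (List.nodup_cons.1 hL).1
    have hL' : L.Nodup := (List.nodup_cons.1 hL).2
    show (∑ k ∈ univ.filter (fun k => φ k = some i), DM L (Function.update φ k none) 0) = 0
    refine Finset.sum_eq_zero fun k hk => ?_
    rw [Finset.mem_filter] at hk
    have hk := hk.2
    refine ih hL' _ fun g' => h ?_
    have huniq : ∀ k', φ k' = some i → k' = k := by
      intro k' hk'
      by_contra hne
      have hupd : Function.update φ k none k' = some i := by
        rw [Function.update_of_ne hne]; exact hk'
      exact hiL (List.mem_toFinset.1 ((g'.2 i).1 ⟨k', hupd⟩))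
    constructor
    · intro k₁ k₂ j h₁ h₂
      by_cases hji : j = i
      · subst hji
        rw [huniq k₁ h₁, huniq k₂ h₂]
      · have hk₁ : k₁ ≠ k := fun hh => hji (Option.some_inj.1 (by rw [← h₁, hh, hk]))
        have hk₂ : k₂ ≠ k := fun hh => hji (Option.some_inj.1 (by rw [← h₂, hh, hk]))
        refine g'.1 k₁ k₂ j ?_ ?_
        · rw [Function.update_of_ne hk₁]; exact h₁
        · rw [Function.update_of_ne hk₂]; exact h₂
    · intro j
      rw [List.toFinset_cons, Finset.mem_insert]
      constructor
      · rintro ⟨k', hk'⟩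
        by_cases hji : j = i
        · exact Or.inl hji
        · have hk'k : k' ≠ k := fun hh => hji (Option.some_inj.1 (by rw [← hk', hh, hk]))
          refine Or.inr ((g'.2 j).1 ⟨k', ?_⟩)
          rw [Function.update_of_ne hk'k]; exact hk'
      · rintro (hj | hj)
        · exact ⟨k, hj ▸ hk⟩
        · obtain ⟨k', hk'⟩ := (g'.2 j).2 hj
          have hk'k : k' ≠ k := fun hh => by
            rw [hh, Function.update_self] at hk'; exact absurd hk' (by simp)
          rw [Function.update_of_ne hk'k] at hk'
          exact ⟨k', hk'⟩


variable {m : ℕ}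

lemma ofFn_orderEmbOfFin_eq_filter (T : Finset (Fin m)) :
    List.ofFn (fun k => T.orderEmbOfFin rfl k) = (List.finRange m).filter (· ∈ T) := by
  classical
  haveI : IsAntisymm (Fin m) (· ≤ ·) := ⟨fun _ _ h h' => le_antisymm h h'⟩
  refine (fun h1 h2 h3 => List.Perm.eq_of_pairwise' (r := (· ≤ ·)) h2 h3 h1) ?_ ?_ ?_
  · refine (List.perm_ext_iff_of_nodup ?_ ?_).2 fun j => ?_
    · exact List.nodup_ofFn.2 (T.orderEmbOfFin rfl).injective
    · exact (List.nodup_finRange m).filter _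
    · rw [List.mem_ofFn, List.mem_filter]
      simp only [Finset.range_orderEmbOfFin, Finset.mem_coe, List.mem_finRange, true_and,
        decide_eq_true_eq]
      exact Set.ext_iff.1 (Finset.range_orderEmbOfFin T rfl) j
  · exact List.pairwise_ofFn.2 fun i j h => (T.orderEmbOfFin rfl).monotone h.le
  · exact List.Pairwise.sublist List.filter_sublist (List.pairwise_le_finRange m)

lemma univ_list : List.ofFn (fun k => (univ : Finset (Fin m)).orderEmbOfFin rfl k)
    = List.finRange m := by
  rw [ofFn_orderEmbOfFin_eq_filter]
  apply List.filter_eq_self.2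
  intro a _
  simp

/-- injectivity on the support -/
def Inj {n : ℕ} (φ : Fin n → Option (Fin m)) : Prop :=
  ∀ k₁ k₂ j, φ k₁ = some j → φ k₂ = some j → k₁ = k₂

instance {n : ℕ} (φ : Fin n → Option (Fin m)) : Decidable (Inj φ) :=
  inferInstanceAs (Decidable (∀ k₁ k₂ j, φ k₁ = some j → φ k₂ = some j → k₁ = k₂))

/-- the image of the support -/
noncomputable def im {n : ℕ} (φ : Fin n → Option (Fin m)) : Finset (Fin m) := by
  classical exact univ.filter fun j => ∃ k, φ k = some j

lemma good_iff {n : ℕ} (φ : Fin n → Option (Fin m)) (U : Finset (Fin m)) :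
    Good φ U ↔ Inj φ ∧ U = im φ := by
  classical
  constructor
  · rintro ⟨h1, h2⟩
    refine ⟨h1, ?_⟩
    ext j
    rw [← h2 j]
    simp [im]
  · rintro ⟨h1, rfl⟩
    refine ⟨h1, fun j => ?_⟩
    simp [im]

open scoped Classical in
lemma mixedPartial_G_mono {n : ℕ} (G : (Fin m → ℝ) → ℝ) (hG : ContDiff ℝ (⊤ : ℕ∞) G)
    (b : Fin m → ℝ) (hGd : ∀ T : Finset (Fin m), mixedPartial G T = ∏ j ∈ T, b j)
    (φ : Fin n → Option (Fin m)) :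
    mixedPartial (fun ε => G ε * Mono φ ε) univ =
      if Inj φ then ∏ j ∈ (im φ)ᶜ, b j else 0 := by
  classical
  rw [mixedPartial_eq_DIter (hG.mul (Mono_contDiff φ)) univ, univ_list,
    DIter_mul (List.finRange m) (List.nodup_finRange m) hG (Mono_contDiff φ)]
  beta_reduce
  have hstep : ∀ T ∈ ((List.finRange m).toFinset).powerset,
      DIter ((List.finRange m).filter (· ∈ T)) G 0
        * DIter ((List.finRange m).filter (· ∉ T)) (Mono φ) 0
      = (∏ j ∈ T, b j) * (if Good φ Tᶜ then 1 else 0) := by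
    intro T _
    congr 1
    · rw [← ofFn_orderEmbOfFin_eq_filter, ← mixedPartial_eq_DIter hG T, hGd T]
    · have hnd : ((List.finRange m).filter (· ∉ T)).Nodup := (List.nodup_finRange m).filter _
      have htf : ((List.finRange m).filter (· ∉ T)).toFinset = Tᶜ := by
        ext j
        simp [List.mem_filter]
      rw [DIter_mono _ hnd φ]
      by_cases hGood : Good φ Tᶜ
      · rw [if_pos hGood, DM_zero_of_good _ hnd φ (htf ▸ hGood)]
      · rw [if_neg hGood, DM_zero_of_bad _ hnd φ (htf ▸ hGood)]
  rw [Finset.sum_congr rfl hstep]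
  by_cases hInj : Inj φ
  · rw [if_pos hInj]
    rw [Finset.sum_eq_single ((im φ)ᶜ)]
    · have : Good φ ((im φ)ᶜ)ᶜ := by
        rw [good_iff]
        exact ⟨hInj, by rw [compl_compl]⟩
      rw [if_pos this, mul_one]
    · intro T _ hT
      have : ¬ Good φ Tᶜ := by
        rw [good_iff]
        rintro ⟨-, h2⟩
        exact hT (by rw [← h2, compl_compl])
      rw [if_neg this, mul_zero]
    · intro h
      exact absurd (by simp) h
  · rw [if_neg hInj]
    refine Finset.sum_eq_zero fun T _ => ?_
    have : ¬ Good φ Tᶜ := fun h => hInj ((good_iff φ Tᶜ).1 h).1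
    rw [if_neg this, mul_zero]


variable {m : ℕ}

lemma mixedPartial_sum {ι : Type*} (s : Finset ι) (f : ι → (Fin m → ℝ) → ℝ)
    (hf : ∀ a ∈ s, ContDiff ℝ (⊤ : ℕ∞) (f a)) (T : Finset (Fin m)) :
    mixedPartial (fun ε => ∑ a ∈ s, f a ε) T = ∑ a ∈ s, mixedPartial (f a) T := by
  classical
  induction s using Finset.cons_induction with
  | empty =>
    simp only [Finset.sum_empty]
    rw [mixedPartial, iteratedFDeriv_zero_fun]
    rfl
  | cons a s ha ih =>
    simp only [Finset.sum_cons]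
    rw [mixedPartial]
    have h1 : ContDiff ℝ (T.card : ℕ∞) (f a) := (hf a (Finset.mem_cons_self a s)).of_le (by exact_mod_cast le_top)
    have h2 : ContDiff ℝ (T.card : ℕ∞) (fun ε => ∑ b ∈ s, f b ε) :=
      (ContDiff.sum fun b hb => hf b (Finset.mem_cons_of_mem hb)).of_le (by exact_mod_cast le_top)
    have := iteratedFDeriv_add_apply (x := (0 : Fin m → ℝ)) (i := T.card) h1.contDiffAt h2.contDiffAt
    have heq : (fun ε => f a ε + ∑ b ∈ s, f b ε) = f a + fun ε => ∑ b ∈ s, f b ε := rfl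
    rw [heq, this]
    rw [ContinuousMultilinearMap.add_apply]
    rw [← ih (fun b hb => hf b (Finset.mem_cons_of_mem hb))]
    rfl

lemma mixedPartial_const_mul (r : ℝ) (f : (Fin m → ℝ) → ℝ) (hf : ContDiff ℝ (⊤ : ℕ∞) f)
    (T : Finset (Fin m)) :
    mixedPartial (fun ε => r * f ε) T = r * mixedPartial f T := by
  have heq : (fun ε => r * f ε) = r • f := by funext ε; simp [smul_eq_mul]
  rw [mixedPartial, heq, iteratedFDeriv_const_smul_apply (hf.contDiffAt.of_le (by exact_mod_cast le_top))]
  rfl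

lemma exists_extend {α : Type*} [Fintype α] [DecidableEq α] {k : ℕ} (f g : Fin k → α)
    (hf : Function.Injective f) (hg : Function.Injective g) :
    ∃ σ : Equiv.Perm α, ∀ r, σ (f r) = g r := by
  classical
  have hc : Fintype.card ((Set.range f)ᶜ : Set α) = Fintype.card ((Set.range g)ᶜ : Set α) := by
    rw [Fintype.card_compl_set, Fintype.card_compl_set,
      Set.card_range_of_injective hf, Set.card_range_of_injective hg]
  let e₁ : Fin k ≃ Set.range f := Equiv.ofInjective f hf
  let e₂ : Fin k ≃ Set.range g := Equiv.ofInjective g hg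
  let ec : ((Set.range f)ᶜ : Set α) ≃ ((Set.range g)ᶜ : Set α) := Fintype.equivOfCardEq hc
  refine ⟨(Equiv.Set.sumCompl (Set.range f)).symm.trans
    (((e₁.symm.trans e₂).sumCongr ec).trans (Equiv.Set.sumCompl (Set.range g))), fun r => ?_⟩
  simp only [Equiv.trans_apply]
  rw [Equiv.Set.sumCompl_symm_apply_of_mem (Set.mem_range_self r)]
  have h1 : e₁.symm ⟨f r, Set.mem_range_self r⟩ = r := by
    apply e₁.injective
    rw [Equiv.apply_symm_apply]
    rfl
  simp only [Equiv.sumCongr_apply, Sum.map_inl, Equiv.trans_apply, h1]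
  rw [show e₂ r = ⟨g r, Set.mem_range_self r⟩ from rfl]
  exact Equiv.Set.sumCompl_apply_inl _ _

lemma integral_comp_perm {Λ : Type*} [MeasurableSpace Λ] (ν : Measure Λ) [IsFiniteMeasure ν]
    {n : ℕ} (σ : Equiv.Perm (Fin n)) (g : (Fin n → Λ) → ℝ) :
    ∫ x, g (x ∘ σ) ∂Measure.pi (fun _ : Fin n => ν)
      = ∫ x, g x ∂Measure.pi (fun _ : Fin n => ν) := by
  have hMP := measurePreserving_arrowCongr' (fun _ : Fin n => ν) (fun _ : Fin n => ν)
    σ.symm (MeasurableEquiv.refl Λ) (fun _ => ⟨measurable_id, Measure.map_id⟩)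
  have h := hMP.integral_comp
    (MeasurableEquiv.arrowCongr' σ.symm (MeasurableEquiv.refl Λ)).measurableEmbedding g
  rw [← h]
  rfl


variable {m : ℕ}

noncomputable def Wfun {Λ : Type*} (q : ℝ) (ℓ : Λ → Λ → ℝ) {m : ℕ} (z : Fin m → Λ) {n : ℕ}
    (φ : Fin n → Option (Fin m)) (x : Fin n → Λ) : ℝ :=
  ∏ k, (φ k).elim q (fun i => ℓ (z i) (x k))

open Classical in
lemma exists_unique_slot {n : ℕ} {φ : Fin n → Option (Fin m)} (hφ : Inj φ)
    {S : Finset (Fin m)} (him : im φ = S) (r : Fin S.card) :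
    ∃! k, φ k = some (S.orderEmbOfFin rfl r) := by
  have hjim : S.orderEmbOfFin rfl r ∈ im φ := by
    rw [him]; exact Finset.orderEmbOfFin_mem S rfl r
  rw [im, Finset.mem_filter] at hjim
  obtain ⟨k, hk⟩ := hjim.2
  exact ⟨k, hk, fun k' hk' => hφ k' k _ hk' hk⟩

open Classical in
/-- the slot map of an injective partial assignment with image `S`. -/
noncomputable def slotMap {n : ℕ} {φ : Fin n → Option (Fin m)} {S : Finset (Fin m)}
    (hφ : Inj φ) (him : im φ = S) (r : Fin S.card) : Fin n :=
  Fintype.choose _ (exists_unique_slot hφ him r)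

open Classical in
lemma slotMap_spec {n : ℕ} {φ : Fin n → Option (Fin m)} {S : Finset (Fin m)}
    (hφ : Inj φ) (him : im φ = S) (r : Fin S.card) :
    φ (slotMap hφ him r) = some (S.orderEmbOfFin rfl r) :=
  Fintype.choose_spec _ (exists_unique_slot hφ him r)

lemma eq_slotMap {n : ℕ} {φ : Fin n → Option (Fin m)} {S : Finset (Fin m)}
    (hφ : Inj φ) (him : im φ = S) {r : Fin S.card} {k : Fin n}
    (h : φ k = some (S.orderEmbOfFin rfl r)) : k = slotMap hφ him r :=
  (exists_unique_slot hφ him r).unique h (slotMap_spec hφ him r)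

lemma slotMap_inj {n : ℕ} {φ : Fin n → Option (Fin m)} {S : Finset (Fin m)}
    (hφ : Inj φ) (him : im φ = S) : Function.Injective (slotMap hφ him) := by
  intro r₁ r₂ h
  have h1 := slotMap_spec hφ him r₁
  rw [h, slotMap_spec hφ him r₂, Option.some_inj] at h1
  exact (S.orderEmbOfFin rfl).injective h1.symm

lemma mem_S_exists_r {S : Finset (Fin m)} {j : Fin m} (hj : j ∈ S) :
    ∃ r : Fin S.card, S.orderEmbOfFin rfl r = j := by
  have h := Finset.range_orderEmbOfFin S (rfl : S.card = S.card)
  have : j ∈ Set.range (S.orderEmbOfFin rfl) := by rw [h]; exact hj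
  exact this

lemma integral_W_eq {Λ : Type*} [MeasurableSpace Λ] (ν : Measure Λ) [IsFiniteMeasure ν]
    {n : ℕ} (q : ℝ) (ℓ : Λ → Λ → ℝ) (z : Fin m → Λ)
    (J : (Fin n → Λ) → ℝ) (hJsym : ∀ (x : Fin n → Λ) (σ : Equiv.Perm (Fin n)), J (x ∘ σ) = J x)
    {S : Finset (Fin m)} (hS : S.card ≤ n) (φ : Fin n → Option (Fin m))
    (hφ : Inj φ) (him : im φ = S) :
    ∫ x, J x * Wfun q ℓ z φ x ∂Measure.pi (fun _ : Fin n => ν)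
      = q ^ (n - S.card) *
        ∫ x, J x * ∏ r : Fin S.card, ℓ (z (S.orderEmbOfFin rfl r)) (x (Fin.castLE hS r))
          ∂Measure.pi (fun _ : Fin n => ν) := by
  classical
  set ψ : Fin S.card → Fin n := slotMap hφ him with hψdef
  have hψ : ∀ r, φ (ψ r) = some (S.orderEmbOfFin rfl r) := slotMap_spec hφ him
  have hψinj : Function.Injective ψ := slotMap_inj hφ him
  have hfil : univ.filter (fun k => φ k ≠ none) = Finset.image ψ univ := by
    ext k
    simp only [Finset.mem_filter, Finset.mem_univ, true_and, Finset.mem_image]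
    constructor
    · intro hk
      obtain ⟨j, hj⟩ := Option.ne_none_iff_exists'.1 hk
      have hjS : j ∈ S := by
        rw [← him, im, Finset.mem_filter]
        exact ⟨Finset.mem_univ j, k, hj⟩
      obtain ⟨r, hr⟩ := mem_S_exists_r hjS
      exact ⟨r, (eq_slotMap hφ him (by rw [hj, hr])).symm⟩
    · rintro ⟨r, rfl⟩
      rw [hψ r]
      simp
  have hcard2 : (univ.filter (fun k => ¬ (φ k ≠ none))).card = n - S.card := by
    have h := Finset.card_filter_add_card_filter_not
      (s := (univ : Finset (Fin n))) (p := fun k => φ k ≠ none)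
    have hcard1 : (univ.filter (fun k => φ k ≠ none)).card = S.card := by
      rw [hfil, Finset.card_image_of_injective _ hψinj, Finset.card_univ, Fintype.card_fin]
    rw [hcard1, Finset.card_univ, Fintype.card_fin] at h
    omega
  have hWsplit : ∀ x : Fin n → Λ, Wfun q ℓ z φ x
      = (∏ r : Fin S.card, ℓ (z (S.orderEmbOfFin rfl r)) (x (ψ r))) * q ^ (n - S.card) := by
    intro x
    rw [Wfun, ← Finset.prod_filter_mul_prod_filter_not univ (fun k => φ k ≠ none)]
    congr 1
    · rw [hfil, Finset.prod_image (fun r _ r' _ h => hψinj h)]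
      exact Finset.prod_congr rfl fun r _ => by simp [hψ r]
    · have hq : ∀ k ∈ univ.filter (fun k => ¬ (φ k ≠ none)),
          ((φ k).elim q fun i => ℓ (z i) (x k)) = q := by
        intro k hk
        rw [Finset.mem_filter] at hk
        simp [not_not.1 hk.2]
      rw [Finset.prod_congr rfl hq, Finset.prod_const, hcard2]
  obtain ⟨σ, hσ⟩ := exists_extend (fun r => Fin.castLE hS r) ψ
    (Fin.castLE_injective hS) hψinj
  have h1 : (fun x : Fin n → Λ => J x * Wfun q ℓ z φ x)
      = fun x => q ^ (n - S.card)
          * (J x * ∏ r, ℓ (z (S.orderEmbOfFin rfl r)) (x (ψ r))) := by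
    funext x
    rw [hWsplit x]
    ring
  rw [h1, integral_const_mul]
  congr 1
  rw [← integral_comp_perm ν σ
    (fun x => J x * ∏ r : Fin S.card, ℓ (z (S.orderEmbOfFin rfl r)) (x (Fin.castLE hS r)))]
  refine congrArg _ (funext fun x => ?_)
  rw [hJsym x σ]
  congr 1
  exact Finset.prod_congr rfl fun r _ => by rw [Function.comp_apply, hσ r]

lemma fiber_empty {n : ℕ} (S : Finset (Fin m)) (hS : ¬ S.card ≤ n) :
    (univ : Finset (Fin n → Option (Fin m))).filter (fun φ => Inj φ ∧ im φ = S) = ∅ := by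
  classical
  rw [Finset.filter_eq_empty_iff]
  rintro φ - ⟨hφ, him⟩
  refine hS ?_
  calc S.card = Fintype.card (Fin S.card) := (Fintype.card_fin _).symm
  _ ≤ Fintype.card (Fin n) := Fintype.card_le_of_injective _ (slotMap_inj hφ him)
  _ = n := Fintype.card_fin n

open Classical in
/-- the partial assignment associated to an embedding. -/
noncomputable def ofEmb {n : ℕ} (S : Finset (Fin m)) (e : Fin S.card ↪ Fin n) :
    Fin n → Option (Fin m) :=
  fun k => if h : ∃ r, e r = k then some (S.orderEmbOfFin rfl h.choose) else none

lemma ofEmb_apply {n : ℕ} (S : Finset (Fin m)) (e : Fin S.card ↪ Fin n) (r : Fin S.card) :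
    ofEmb S e (e r) = some (S.orderEmbOfFin rfl r) := by
  classical
  have hex : ∃ r', e r' = e r := ⟨r, rfl⟩
  rw [ofEmb, dif_pos hex]
  congr 1
  exact congrArg _ (e.injective hex.choose_spec)

lemma ofEmb_eq_some {n : ℕ} (S : Finset (Fin m)) (e : Fin S.card ↪ Fin n)
    {k : Fin n} {j : Fin m} (h : ofEmb S e k = some j) :
    ∃ r, e r = k ∧ S.orderEmbOfFin rfl r = j := by
  classical
  by_cases hex : ∃ r, e r = k
  · rw [ofEmb, dif_pos hex, Option.some_inj] at h
    exact ⟨hex.choose, hex.choose_spec, h⟩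
  · rw [ofEmb, dif_neg hex] at h
    exact absurd h (by simp)

lemma ofEmb_inj {n : ℕ} (S : Finset (Fin m)) (e : Fin S.card ↪ Fin n) : Inj (ofEmb S e) := by
  intro k₁ k₂ j h₁ h₂
  obtain ⟨r₁, hr₁, hj₁⟩ := ofEmb_eq_some S e h₁
  obtain ⟨r₂, hr₂, hj₂⟩ := ofEmb_eq_some S e h₂
  have : r₁ = r₂ := (S.orderEmbOfFin rfl).injective (by rw [hj₁, hj₂])
  rw [← hr₁, ← hr₂, this]

lemma ofEmb_im {n : ℕ} (S : Finset (Fin m)) (e : Fin S.card ↪ Fin n) : im (ofEmb S e) = S := by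
  classical
  ext j
  rw [im, Finset.mem_filter]
  simp only [Finset.mem_univ, true_and]
  constructor
  · rintro ⟨k, hk⟩
    obtain ⟨r, -, hj⟩ := ofEmb_eq_some S e hk
    rw [← hj]
    exact Finset.orderEmbOfFin_mem S rfl _
  · intro hj
    obtain ⟨r, hr⟩ := mem_S_exists_r hj
    exact ⟨e r, by rw [ofEmb_apply, hr]⟩

noncomputable def toEmb {n : ℕ} (S : Finset (Fin m)) (φ : Fin n → Option (Fin m))
    (h : Inj φ ∧ im φ = S) : Fin S.card ↪ Fin n :=
  ⟨slotMap h.1 h.2, slotMap_inj h.1 h.2⟩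

lemma card_fiber {n : ℕ} (S : Finset (Fin m)) (hS : S.card ≤ n) :
    ((univ : Finset (Fin n → Option (Fin m))).filter (fun φ => Inj φ ∧ im φ = S)).card
      = n.descFactorial S.card := by
  classical
  have hcard : Fintype.card (Fin S.card ↪ Fin n) = n.descFactorial S.card := by
    rw [Fintype.card_embedding_eq, Fintype.card_fin, Fintype.card_fin]
  rw [← hcard, ← Finset.card_univ]
  refine Finset.card_bij'
    (i := fun φ hφ => toEmb S φ (Finset.mem_filter.1 hφ).2)
    (j := fun e _ => ofEmb S e)
    (fun _ _ => Finset.mem_univ _)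
    (fun e _ => Finset.mem_filter.2 ⟨Finset.mem_univ _, ofEmb_inj S e, ofEmb_im S e⟩)
    ?_ ?_
  · -- left inverse
    intro φ hφ
    obtain ⟨hInj, him⟩ := (Finset.mem_filter.1 hφ).2
    funext k
    show ofEmb S (toEmb S φ ⟨hInj, him⟩) k = φ k
    cases hφk : φ k with
    | none =>
      have hex : ¬ ∃ r, toEmb S φ ⟨hInj, him⟩ r = k := by
        rintro ⟨r, hr⟩
        have hs := slotMap_spec hInj him r
        rw [show toEmb S φ ⟨hInj, him⟩ r = slotMap hInj him r from rfl] at hr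
        rw [hr, hφk] at hs
        exact absurd hs (by simp)
      rw [ofEmb, dif_neg hex]
    | some j =>
      have hjS : j ∈ S := by
        have : j ∈ im φ := by
          rw [im, Finset.mem_filter]
          exact ⟨Finset.mem_univ j, k, hφk⟩
        rw [him] at this
        exact this
      obtain ⟨r, hr⟩ := mem_S_exists_r hjS
      have hk : k = slotMap hInj him r := eq_slotMap hInj him (by rw [hφk, hr])
      rw [hk, show slotMap hInj him r = toEmb S φ ⟨hInj, him⟩ r from rfl, ofEmb_apply, hr]
  · -- right inverse
    intro e he
    ext r
    exact congrArg Fin.val ((exists_unique_slot (ofEmb_inj S e) (ofEmb_im S e) r).unique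
      (slotMap_spec (ofEmb_inj S e) (ofEmb_im S e) r) (ofEmb_apply S e r))


variable {m : ℕ}

lemma fiber_sum {Λ : Type*} [MeasurableSpace Λ] (ν : Measure Λ) [IsFiniteMeasure ν]
    {n : ℕ} (q : ℝ) (ℓ : Λ → Λ → ℝ) (z : Fin m → Λ)
    (J : (Fin n → Λ) → ℝ) (hJsym : ∀ (x : Fin n → Λ) (σ : Equiv.Perm (Fin n)), J (x ∘ σ) = J x)
    (S : Finset (Fin m)) (b : Fin m → ℝ) :
    (∑ φ ∈ (univ : Finset (Fin n → Option (Fin m))).filter (fun φ => Inj φ ∧ im φ = S),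
      ((1 / (Nat.factorial n : ℝ)) *
          ∫ x, J x * Wfun q ℓ z φ x ∂Measure.pi (fun _ : Fin n => ν)) * ∏ j ∈ Sᶜ, b j)
    = if hS : S.card ≤ n then
        (∏ j ∈ Sᶜ, b j) * (q ^ (n - S.card) / (Nat.factorial (n - S.card) : ℝ)) *
          ∫ x : Fin n → Λ, J x *
            ∏ r : Fin S.card, ℓ (z (S.orderEmbOfFin rfl r)) (x (Fin.castLE hS r))
            ∂Measure.pi (fun _ : Fin n => ν)
      else 0 := by
  classical
  by_cases hS : S.card ≤ n
  · rw [dif_pos hS]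
    set I := ∫ x : Fin n → Λ, J x *
        ∏ r : Fin S.card, ℓ (z (S.orderEmbOfFin rfl r)) (x (Fin.castLE hS r))
        ∂Measure.pi (fun _ : Fin n => ν) with hI
    have hterm : ∀ φ ∈ (univ : Finset (Fin n → Option (Fin m))).filter
        (fun φ => Inj φ ∧ im φ = S),
        ((1 / (Nat.factorial n : ℝ)) *
            ∫ x, J x * Wfun q ℓ z φ x ∂Measure.pi (fun _ : Fin n => ν)) * ∏ j ∈ Sᶜ, b j
          = (1 / (Nat.factorial n : ℝ)) * (q ^ (n - S.card) * I) * ∏ j ∈ Sᶜ, b j := by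
      intro φ hφ
      obtain ⟨hInj, him⟩ := (Finset.mem_filter.1 hφ).2
      rw [integral_W_eq ν q ℓ z J hJsym hS φ hInj him]
    rw [Finset.sum_congr rfl hterm, Finset.sum_const, card_fiber S hS, nsmul_eq_mul]
    have h1 : (Nat.factorial n : ℝ) ≠ 0 := Nat.cast_ne_zero.2 (Nat.factorial_ne_zero n)
    have h2 : (Nat.factorial (n - S.card) : ℝ) ≠ 0 :=
      Nat.cast_ne_zero.2 (Nat.factorial_ne_zero _)
    have hfac : ((Nat.factorial (n - S.card) : ℝ)) * (n.descFactorial S.card : ℝ)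
        = (Nat.factorial n : ℝ) := by
      exact_mod_cast congrArg (Nat.cast (R := ℝ)) (Nat.factorial_mul_descFactorial hS)
    have key : (n.descFactorial S.card : ℝ) / (Nat.factorial n : ℝ)
        = 1 / (Nat.factorial (n - S.card) : ℝ) := by
      rw [div_eq_div_iff h1 h2, one_mul, mul_comm]
      exact hfac
    have hrw : (n.descFactorial S.card : ℝ)
          * ((1 / (Nat.factorial n : ℝ)) * (q ^ (n - S.card) * I) * ∏ j ∈ Sᶜ, b j)
        = ((n.descFactorial S.card : ℝ) / (Nat.factorial n : ℝ))
            * (q ^ (n - S.card) * I) * ∏ j ∈ Sᶜ, b j := by ring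
    rw [hrw, key]
    ring
  · rw [dif_neg hS, fiber_empty S hS, Finset.sum_empty]


end JanossyAux

open JanossyAux

/-- Finitized Janossy density formula for the observation model (Lemma on the
posterior point process distribution, formula (ii)): for
`F(ε) = G₁(ε) · Σ_{n ≤ N} (1/n!) ∫ j^(n)(x_{1:n}) ∏_k (q + Σ_i ε_i ℓ(z_i|x_k)) ν^n(dx)`,
where `G₁` is the (smooth) clutter PGFl whose Dirac derivatives at `0` are
`∏_{j∈T} c(z_j)`, the `m`-fold Dirac-directional derivative of `F` at `g = 0`
equals
`Σ_{n≤N} Σ_{S⊆{1,…,m}, |S|≤n} ∏_{j∉S} c(z_j) · q^{n−|S|}/(n−|S|)! ·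
  ∫ j^(n)(x_{1:n}) ∏_{i∈S} ℓ(z_i|x_i) ν^n(dx)`. -/
theorem janossy_density_formula {Λ : Type*} [MeasurableSpace Λ]
    (ν : Measure Λ) [IsFiniteMeasure ν]
    (q : ℝ) (ℓ : Λ → Λ → ℝ) (c : Λ → ℝ) (N : ℕ)
    (jf : (n : ℕ) → (Fin n → Λ) → ℝ)
    (hjsym : ∀ (n : ℕ) (x : Fin n → Λ) (σ : Equiv.Perm (Fin n)), jf n (x ∘ σ) = jf n x)
    (hjint : ∀ n, Integrable (jf n) (Measure.pi fun _ : Fin n => ν))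
    (hℓmeas : Measurable (Function.uncurry ℓ))
    (C : ℝ) (hℓbdd : ∀ a b, |ℓ a b| ≤ C)
    (m : ℕ) (z : Fin m → Λ)
    (G₁ : (Fin m → ℝ) → ℝ) (hG₁smooth : ContDiff ℝ (⊤ : ℕ∞) G₁)
    (hG₁deriv : ∀ T : Finset (Fin m), mixedPartial G₁ T = ∏ j ∈ T, c (z j))
    (F : (Fin m → ℝ) → ℝ)
    (hF : ∀ ε, F ε = G₁ ε *
      ∑ n ∈ Finset.range (N + 1), (1 / (Nat.factorial n : ℝ)) *
        ∫ x : Fin n → Λ, jf n x * ∏ k : Fin n, (q + ∑ i, ε i * ℓ (z i) (x k))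
          ∂Measure.pi (fun _ : Fin n => ν)) :
    mixedPartial F Finset.univ =
      ∑ n ∈ Finset.range (N + 1), ∑ S : Finset (Fin m),
        if hS : S.card ≤ n then
          (∏ j ∈ Sᶜ, c (z j)) * (q ^ (n - S.card) / (Nat.factorial (n - S.card) : ℝ)) *
            ∫ x : Fin n → Λ, jf n x *
              ∏ k : Fin S.card, ℓ (z (S.orderEmbOfFin rfl k)) (x (Fin.castLE hS k))
              ∂Measure.pi (fun _ : Fin n => ν)
        else 0 := by
  classical
  -- measurability and integrability of the weight functions
  have hWmeas : ∀ (n : ℕ) (φ : Fin n → Option (Fin m)), Measurable (Wfun q ℓ z φ) := by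
    intro n φ
    apply Finset.measurable_prod
    intro k _
    cases hφ : φ k with
    | none => simp only [hφ, Option.elim_none]; exact measurable_const
    | some i =>
      simp only [hφ, Option.elim_some]
      exact hℓmeas.comp (measurable_const.prodMk (measurable_pi_apply k))
  have hCb : True := trivial
  set Cb : ℝ := max |q| C with hCbdef
  have hWbdd : ∀ (n : ℕ) (φ : Fin n → Option (Fin m)) (x : Fin n → Λ),
      |Wfun q ℓ z φ x| ≤ Cb ^ n := by
    intro n φ x
    rw [Wfun, Finset.abs_prod]
    calc (∏ k, |(φ k).elim q fun i => ℓ (z i) (x k)|) ≤ ∏ _k : Fin n, Cb := by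
          refine Finset.prod_le_prod (fun k _ => abs_nonneg _) fun k _ => ?_
          cases hφ : φ k with
          | none =>
            simp only [hφ, Option.elim_none]
            exact le_max_left |q| C
          | some i =>
            simp only [hφ, Option.elim_some]
            exact le_trans (hℓbdd (z i) (x k)) (le_max_right |q| C)
    _ = Cb ^ n := by rw [Finset.prod_const, Finset.card_univ, Fintype.card_fin]
  have hWint : ∀ (n : ℕ) (φ : Fin n → Option (Fin m)),
      Integrable (fun x => jf n x * Wfun q ℓ z φ x) (Measure.pi fun _ : Fin n => ν) := by
    intro n φ
    have h := Integrable.bdd_mul (c := Cb ^ n) (hjint n)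
      ((hWmeas n φ).aestronglyMeasurable)
      (Filter.Eventually.of_forall fun x => by
        rw [Real.norm_eq_abs]; exact hWbdd n φ x)
    exact h.congr (Filter.Eventually.of_forall fun x => mul_comm _ _)
  -- pointwise expansion of the product over an auxiliary Option-valued index
  have hexp : ∀ (n : ℕ) (ε : Fin m → ℝ) (x : Fin n → Λ),
      (∏ k : Fin n, (q + ∑ i, ε i * ℓ (z i) (x k)))
        = ∑ φ : Fin n → Option (Fin m), Mono φ ε * Wfun q ℓ z φ x := by
    intro n ε x
    have h1 : ∀ k : Fin n, (q + ∑ i, ε i * ℓ (z i) (x k))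
        = ∑ o ∈ (univ : Finset (Option (Fin m))),
            o.elim q (fun i => ε i * ℓ (z i) (x k)) := by
      intro k
      rw [Fintype.sum_option]
      simp
    rw [Finset.prod_congr rfl fun k _ => h1 k, Finset.prod_univ_sum, Fintype.piFinset_univ]
    refine Finset.sum_congr rfl fun φ _ => ?_
    rw [Mono, Wfun, ← Finset.prod_mul_distrib]
    refine Finset.prod_congr rfl fun k _ => ?_
    cases hφ : φ k with
    | none => simp
    | some i => simp
  -- rewrite each integral
  have h2 : ∀ (n : ℕ) (ε : Fin m → ℝ),
      (∫ x : Fin n → Λ, jf n x * ∏ k : Fin n, (q + ∑ i, ε i * ℓ (z i) (x k))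
          ∂Measure.pi (fun _ : Fin n => ν))
        = ∑ φ : Fin n → Option (Fin m), Mono φ ε *
            ∫ x, jf n x * Wfun q ℓ z φ x ∂Measure.pi (fun _ : Fin n => ν) := by
    intro n ε
    have hptwise : (fun x : Fin n → Λ => jf n x * ∏ k : Fin n, (q + ∑ i, ε i * ℓ (z i) (x k)))
        = fun x => ∑ φ : Fin n → Option (Fin m),
            Mono φ ε * (jf n x * Wfun q ℓ z φ x) := by
      funext x
      rw [hexp n ε x, Finset.mul_sum]
      exact Finset.sum_congr rfl fun φ _ => by ring
    rw [hptwise, integral_finset_sum _ fun φ _ => (hWint n φ).const_mul _]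
    exact Finset.sum_congr rfl fun φ _ => integral_const_mul _ _
  -- the expansion of F as a linear combination of monomial multiples of G₁
  have hF' : F = fun ε => ∑ n ∈ Finset.range (N + 1), ∑ φ : Fin n → Option (Fin m),
      ((1 / (Nat.factorial n : ℝ)) *
          ∫ x, jf n x * Wfun q ℓ z φ x ∂Measure.pi (fun _ : Fin n => ν))
        * (G₁ ε * Mono φ ε) := by
    funext ε
    rw [hF ε, Finset.mul_sum]
    refine Finset.sum_congr rfl fun n _ => ?_
    rw [h2 n ε, Finset.mul_sum, Finset.mul_sum]
    exact Finset.sum_congr rfl fun φ _ => by ring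
  have hsmooth2 : ∀ (n : ℕ) (φ : Fin n → Option (Fin m)),
      ContDiff ℝ (⊤ : ℕ∞) (fun ε => G₁ ε * Mono φ ε) :=
    fun n φ => hG₁smooth.mul (Mono_contDiff φ)
  rw [hF', mixedPartial_sum (Finset.range (N + 1)) _
    (fun n _ => ContDiff.sum fun φ _ => contDiff_const.mul (hsmooth2 n φ)) univ]
  refine Finset.sum_congr rfl fun n _ => ?_
  rw [mixedPartial_sum univ _ (fun φ _ => contDiff_const.mul (hsmooth2 n φ)) univ]
  have h3 : ∀ φ : Fin n → Option (Fin m),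
      mixedPartial (fun ε =>
          ((1 / (Nat.factorial n : ℝ)) *
            ∫ x, jf n x * Wfun q ℓ z φ x ∂Measure.pi (fun _ : Fin n => ν))
          * (G₁ ε * Mono φ ε)) univ
        = ((1 / (Nat.factorial n : ℝ)) *
            ∫ x, jf n x * Wfun q ℓ z φ x ∂Measure.pi (fun _ : Fin n => ν))
          * (if Inj φ then ∏ j ∈ (im φ)ᶜ, c (z j) else 0) := by
    intro φ
    rw [mixedPartial_const_mul _ _ (hsmooth2 n φ),
      mixedPartial_G_mono G₁ hG₁smooth _ hG₁deriv φ]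
  rw [Finset.sum_congr rfl fun φ _ => h3 φ]
  -- regroup by the image of the support
  have h4 : ∀ φ : Fin n → Option (Fin m),
      ((1 / (Nat.factorial n : ℝ)) *
          ∫ x, jf n x * Wfun q ℓ z φ x ∂Measure.pi (fun _ : Fin n => ν))
        * (if Inj φ then ∏ j ∈ (im φ)ᶜ, c (z j) else 0)
      = if Inj φ then
          ((1 / (Nat.factorial n : ℝ)) *
            ∫ x, jf n x * Wfun q ℓ z φ x ∂Measure.pi (fun _ : Fin n => ν))
          * ∏ j ∈ (im φ)ᶜ, c (z j) else 0 := by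
    intro φ
    by_cases h : Inj φ
    · rw [if_pos h, if_pos h]
    · rw [if_neg h, if_neg h, mul_zero]
  rw [Finset.sum_congr rfl fun φ _ => h4 φ, ← Finset.sum_filter]
  -- fiberwise over S = im φ
  rw [← Finset.sum_fiberwise (univ.filter (fun φ : Fin n → Option (Fin m) => Inj φ))
    (fun φ => im φ) _]
  refine Finset.sum_congr rfl fun S _ => ?_
  have h5 : (univ.filter (fun φ : Fin n → Option (Fin m) => Inj φ)).filter
      (fun φ => im φ = S) = univ.filter (fun φ => Inj φ ∧ im φ = S) := by
    rw [Finset.filter_filter]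
  rw [h5]
  have h6 : ∀ φ ∈ univ.filter (fun φ : Fin n → Option (Fin m) => Inj φ ∧ im φ = S),
      ((1 / (Nat.factorial n : ℝ)) *
          ∫ x, jf n x * Wfun q ℓ z φ x ∂Measure.pi (fun _ : Fin n => ν))
        * ∏ j ∈ (im φ)ᶜ, c (z j)
      = ((1 / (Nat.factorial n : ℝ)) *
          ∫ x, jf n x * Wfun q ℓ z φ x ∂Measure.pi (fun _ : Fin n => ν))
        * ∏ j ∈ Sᶜ, c (z j) := by
    intro φ hφ
    rw [(Finset.mem_filter.1 hφ).2.2]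
  rw [Finset.sum_congr rfl h6]
  exact fiber_sum ν q ℓ z (jf n) (hjsym n) S (fun j => c (z j))
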